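/- If X > 1 is a real number that is not an integer and c > 1, then the series ∑_{m=1, m ≠ X}^∞ (log m)^n / (m^c · |log(X/m)|) converges, and for c = 1 + 1/log T it is O((log T)^{n+2}) as T → ∞. -/

import Mathlib

/-!
Since `X` is not a positive integer and `log (X / m) → -∞`, the distances `|log (X / m)|` are
bounded below by some `δ > 0`. For `c = 1 + ε`, writing `m ^ ε = exp (ε log m)` and bounding this
exponential below by one term of its series gives
`(log m) ^ n / m ^ (1 + ε) ≤ e ^ ε (n + 2)! ε ^ -(n + 2) / (m (1 + log m) ^ 2)`,
and `∑ 1 / (m (1 + log m) ^ 2)` converges by Cauchy condensation. With `ε = 1 / log T` the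
constant is `O((log T) ^ (n + 2))`.
-/

open Real Filter
open scoped Nat

theorem summable_one_div_mul_one_add_log_rpow {p : ℝ} (hp : 1 < p) :
    Summable fun m : ℕ => 1 / (m * (1 + log m) ^ p) := by
  have h_one_add_log_pos {m : ℕ} (hm : 0 < m) : 0 < 1 + log m := by
    have := log_nonneg (Nat.one_le_cast.2 hm : (1 : ℝ) ≤ m); linarith
  refine (summable_condensed_iff_of_nonneg (fun m => ?_) fun a b ha hab => ?_).1 ?_
  · rcases Nat.eq_zero_or_pos m with rfl | hm
    · simp
    · have := h_one_add_log_pos hm; positivity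
  · have := h_one_add_log_pos ha
    gcongr
  · have hlog2 : 0 < log 2 := log_pos one_lt_two
    have hpsum : Summable fun k : ℕ => (log 2) ^ (-p) * (1 / ((k + 1 : ℕ) : ℝ) ^ p) :=
      ((summable_nat_add_iff 1).2 (summable_one_div_nat_rpow.2 hp)).mul_left _
    refine hpsum.of_nonneg_of_le (fun k => by positivity) fun k => ?_
    have hk : (k + 1 : ℝ) * log 2 ≤ 1 + log (2 ^ k : ℕ) := by
      push_cast
      rw [log_pow]
      nlinarith [log_two_lt_d9]
    calc (2 : ℝ) ^ k * (1 / ((2 ^ k : ℕ) * (1 + log (2 ^ k : ℕ)) ^ p))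
        = 1 / (1 + log (2 ^ k : ℕ)) ^ p := by push_cast; field_simp
      _ ≤ 1 / ((k + 1 : ℝ) * log 2) ^ p := by gcongr
      _ = (log 2) ^ (-p) * (1 / ((k + 1 : ℕ) : ℝ) ^ p) := by
        rw [mul_rpow (by positivity) hlog2.le, rpow_neg hlog2.le]; push_cast; field_simp

theorem log_pow_div_rpow_le {x ε : ℝ} (hx : 1 ≤ x) (hε : 0 < ε) (n k : ℕ) :
    log x ^ n / x ^ (1 + ε) ≤ exp ε * (n + k)! / ε ^ (n + k) * (1 / (x * (1 + log x) ^ k)) := by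
  have hL : 0 ≤ log x := log_nonneg hx
  have hx0 : 0 < x := by linarith
  have h_exp : (ε * (1 + log x)) ^ (n + k) ≤ exp ε * exp (log x * ε) * (n + k)! := by
    rw [← exp_add, ← div_le_iff₀ (by positivity), mul_comm (log x), ← mul_one_add]
    exact pow_div_factorial_le_exp _ (mul_nonneg hε.le (by linarith)) _
  have h_num : log x ^ n * (1 + log x) ^ k * ε ^ (n + k) ≤ exp ε * exp (log x * ε) * (n + k)! :=
    calc log x ^ n * (1 + log x) ^ k * ε ^ (n + k)
        ≤ (1 + log x) ^ (n + k) * ε ^ (n + k) := by rw [pow_add (1 + log x)]; gcongr; linarith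
      _ = (ε * (1 + log x)) ^ (n + k) := by rw [mul_pow, mul_comm]
      _ ≤ _ := h_exp
  rw [rpow_add hx0, rpow_one, rpow_def_of_pos hx0, div_le_iff₀ (by positivity)]
  field_simp
  linarith

theorem exists_pos_forall_le_abs_log_div {X : ℝ} (hX : 0 < X) (hXm : ∀ m : ℕ+, X ≠ m) :
    ∃ δ > 0, ∀ m : ℕ+, δ ≤ |log (X / m)| := by
  have h_tendsto : Tendsto (fun m : ℕ+ => |log (X / m)|) cofinite atTop := by
    have h_log : Tendsto (fun m : ℕ+ => log m - log X) cofinite atTop := by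
      refine tendsto_atTop_add_const_right _ _ (tendsto_log_atTop.comp
        (tendsto_natCast_atTop_atTop.comp ?_))
      exact Nat.cofinite_eq_atTop ▸ PNat.coe_injective.tendsto_cofinite
    refine tendsto_atTop_mono (fun m => ?_) h_log
    rw [log_div hX.ne' (by positivity), ← abs_neg, neg_sub]
    exact le_abs_self _
  obtain ⟨m₀, hm₀⟩ := h_tendsto.exists_forall_le
  refine ⟨_, abs_pos.2 (log_ne_zero_of_pos_of_ne_one (by positivity) ?_), hm₀⟩
  rw [Ne, div_eq_one_iff_eq (by positivity)]
  exact hXm m₀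

theorem summable_log_pow_div_rpow_mul_abs_log_and_tsum_le {X δ ε : ℝ} (hδ : 0 < δ)
    (hδX : ∀ m : ℕ+, δ ≤ |log (X / m)|) (hε : 0 < ε) (n : ℕ) :
    (Summable fun m : ℕ+ => log m ^ n / ((m : ℝ) ^ (1 + ε) * |log (X / m)|)) ∧
      ∑' m : ℕ+, log m ^ n / ((m : ℝ) ^ (1 + ε) * |log (X / m)|) ≤
        exp ε * (n + 2)! / ε ^ (n + 2) / δ * ∑' m : ℕ+, 1 / ((m : ℝ) * (1 + log m) ^ 2) := by
  have h_summable : Summable fun m : ℕ+ => 1 / ((m : ℝ) * (1 + log m) ^ 2) := by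
    have := summable_one_div_mul_one_add_log_rpow one_lt_two
    simp only [rpow_two] at this
    exact this.comp_injective PNat.coe_injective
  have h_one_le (m : ℕ+) : (1 : ℝ) ≤ m := by exact_mod_cast m.pos
  have h_nonneg (m : ℕ+) : 0 ≤ log m ^ n / ((m : ℝ) ^ (1 + ε) * |log (X / m)|) := by
    have := log_nonneg (h_one_le m); positivity
  have h_le (m : ℕ+) : log m ^ n / ((m : ℝ) ^ (1 + ε) * |log (X / m)|) ≤
      exp ε * (n + 2)! / ε ^ (n + 2) / δ * (1 / ((m : ℝ) * (1 + log m) ^ 2)) := by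
    have hm := h_one_le m
    calc log m ^ n / ((m : ℝ) ^ (1 + ε) * |log (X / m)|)
        ≤ log m ^ n / ((m : ℝ) ^ (1 + ε) * δ) := by
          have := log_nonneg hm
          gcongr
          exact hδX m
      _ = log m ^ n / (m : ℝ) ^ (1 + ε) / δ := by rw [div_div]
      _ ≤ _ := by
          rw [div_mul_eq_mul_div]
          gcongr
          exact log_pow_div_rpow_le hm hε n 2
  have h_majorant := h_summable.mul_left (exp ε * (n + 2)! / ε ^ (n + 2) / δ)
  have h_summable_terms := h_majorant.of_nonneg_of_le h_nonneg h_le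
  refine ⟨h_summable_terms, ?_⟩
  rw [← tsum_mul_left]
  exact h_summable_terms.tsum_le_tsum h_le h_majorant

theorem sum_logpow_over_log_dist (X : ℝ) (hX : 1 < X) (hXint : ∀ m : ℤ, X ≠ (m : ℝ)) (n : ℕ) :
    (∀ c : ℝ, 1 < c →
        Summable fun m : ℕ+ =>
          (Real.log m) ^ n / ((m : ℝ) ^ c * |Real.log (X / m)|)) ∧
      ∃ C T₀ : ℝ, ∀ T : ℝ, T₀ ≤ T →
        (∑' m : ℕ+,
            (Real.log m) ^ n / ((m : ℝ) ^ (1 + 1 / Real.log T) * |Real.log (X / m)|)) ≤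
          C * (Real.log T) ^ (n + 2) := by
  obtain ⟨δ, hδ, hδX⟩ := exists_pos_forall_le_abs_log_div (by linarith) fun m => by
    exact_mod_cast hXint m
  have h_bound {ε : ℝ} (hε : 0 < ε) :=
    summable_log_pow_div_rpow_mul_abs_log_and_tsum_le hδ hδX hε n
  set S := ∑' m : ℕ+, 1 / ((m : ℝ) * (1 + log m) ^ 2)
  refine ⟨fun c hc => ?_, exp 1 * (n + 2)! / δ * S, exp 1, fun T hT => ?_⟩
  · simpa using (h_bound (sub_pos.2 hc)).1
  have h_logT : 1 ≤ log T := by rwa [le_log_iff_exp_le ((exp_pos 1).trans_le hT)]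
  have hS : 0 ≤ S := tsum_nonneg fun m => by
    have := log_nonneg (show (1 : ℝ) ≤ m by exact_mod_cast m.pos); positivity
  have h_exp : exp (1 / log T) ≤ exp 1 := exp_le_exp.2 ((div_le_one (by positivity)).2 h_logT)
  calc _ ≤ _ := (h_bound (by positivity)).2
    _ = exp (1 / log T) * (n + 2)! / δ * S * log T ^ (n + 2) := by
      rw [one_div, inv_pow, div_inv_eq_mul]; ring
    _ ≤ _ := by gcongr
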